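/- arXiv:1811.05009 — 2 statements merged into one kernel-verified Lean document; each statement's English description precedes it below -/
import Mathlib

section
/- Let V be a normed space and let f : ℕ → ℝ≥0 be a function (thought of as ℓ ↦ |u|_{ℓ,p}) satisfying f(1) ≤ ε·f(2) + 2ν·ε⁻¹·f(0) for all ε ∈ (0,1] in the shifted sense: for every ℓ ≥ 1 and every ε > 0, f(ℓ) ≤ ε·f(ℓ+1) + 2ν·ε⁻¹·f(ℓ−1). Then for every m ≥ 2 there is a constant C(ν,m) such that for every ℓ ≤ m−1 and every ε ∈ (0,1], f(ℓ) ≤ ε^{m−ℓ}·f(m) + C(ν,m)·ε^{−ℓ}·f(0). -/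
/-!
Induct on `m`. Given the interpolation bound at level `m + 1`, apply the recursion at level
`m + 1` with step `ε / 2` and estimate the resulting `f m` by the bound at level `m + 1` with
step `ε / (4A)`; this step is chosen so that the term in `f (m + 1)` comes back with factor
`1 / 2` and can be absorbed, giving `f (m + 1) ≤ ε f (m + 2) + (4A)^(m+1) C ε^{-(m+1)} f 0`.
Substituting this into the bound at level `m + 1` yields the bound at level `m + 2`.
-/

open scoped NNReal

theorem NNReal.le_of_le_half_add_half {x y : ℝ≥0} (h : x ≤ x / 2 + y / 2) : x ≤ y := by
  have h2 : x / 2 + x / 2 ≤ x / 2 + y / 2 := by rwa [add_halves]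
  exact (div_le_div_iff_of_pos_right two_pos).1 (le_of_add_le_add_left h2)

namespace NashInterpolation

def Recursion (A : ℝ≥0) (f : ℕ → ℝ≥0) : Prop :=
  ∀ ℓ : ℕ, 1 ≤ ℓ → ∀ ε : ℝ≥0, 0 < ε → f ℓ ≤ ε * f (ℓ + 1) + A * ε⁻¹ * f (ℓ - 1)

-- The case `ℓ = m` holds trivially; including it lets the induction start at `m = 1`.
def Bound (f : ℕ → ℝ≥0) (m : ℕ) (C : ℝ≥0) : Prop :=
  ∀ ℓ ≤ m, ∀ ε : ℝ≥0, 0 < ε → ε ≤ 1 → f ℓ ≤ ε ^ (m - ℓ) * f m + C * ε⁻¹ ^ ℓ * f 0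

variable {A C : ℝ≥0} {f : ℕ → ℝ≥0} {m : ℕ}

theorem bound_one : Bound f 1 1 := by
  intro ℓ hℓ ε _ _
  interval_cases ℓ <;> simp

theorem Bound.le_next (hC : Bound f (m + 1) C) (hf : Recursion A f) (hA : 1 ≤ 4 * A)
    {ε : ℝ≥0} (hε : 0 < ε) (hε1 : ε ≤ 1) :
    f (m + 1) ≤ ε * f (m + 2) + (4 * A) ^ (m + 1) * C * ε⁻¹ ^ (m + 1) * f 0 := by
  have hA0 : A ≠ 0 := by rintro rfl; simp at hA
  have hrec := hf (m + 1) le_add_self (ε / 2) (by positivity)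
  have hbound := hC m (Nat.le_succ m) (ε / (4 * A)) (by positivity)
    ((div_le_one (by positivity)).2 (hε1.trans hA))
  rw [Nat.add_sub_cancel] at hrec
  rw [Nat.add_sub_cancel_left, pow_one] at hbound
  apply NNReal.le_of_le_half_add_half
  calc f (m + 1) ≤ ε / 2 * f (m + 2) + A * (ε / 2)⁻¹ * f m := hrec
    _ ≤ ε / 2 * f (m + 2) + A * (ε / 2)⁻¹ *
        (ε / (4 * A) * f (m + 1) + C * (ε / (4 * A))⁻¹ ^ m * f 0) := by gcongr
    _ = f (m + 1) / 2 + (ε * f (m + 2) + (4 * A) ^ (m + 1) * C * ε⁻¹ ^ (m + 1) * f 0) / 2 := by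
      simp only [inv_div, div_pow, inv_pow]
      field_simp
      ring

theorem Bound.succ (hC : Bound f (m + 1) C) (hf : Recursion A f) (hA : 1 ≤ 4 * A) :
    Bound f (m + 2) (C + (4 * A) ^ (m + 1) * C) := by
  intro ℓ hℓ ε hε hε1
  rcases hℓ.eq_or_lt with rfl | hlt
  · simp
  obtain ⟨k, hk⟩ : ∃ k, m + 1 = ℓ + k := ⟨m + 1 - ℓ, by omega⟩
  have hcancel : ε ^ k * ε⁻¹ ^ (m + 1) = ε⁻¹ ^ ℓ := by
    rw [hk, inv_pow, inv_pow, pow_add]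
    field_simp
  calc f ℓ ≤ ε ^ (m + 1 - ℓ) * f (m + 1) + C * ε⁻¹ ^ ℓ * f 0 := hC ℓ (by omega) ε hε hε1
    _ ≤ ε ^ (m + 1 - ℓ) * (ε * f (m + 2) + (4 * A) ^ (m + 1) * C * ε⁻¹ ^ (m + 1) * f 0)
        + C * ε⁻¹ ^ ℓ * f 0 := by gcongr; exact hC.le_next hf hA hε hε1
    _ = ε ^ (m + 2 - ℓ) * f (m + 2) + (C + (4 * A) ^ (m + 1) * C) * ε⁻¹ ^ ℓ * f 0 := by
      rw [show m + 1 - ℓ = k by omega, show m + 2 - ℓ = k + 1 by omega, ← hcancel]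
      ring

theorem exists_bound (hf : Recursion A f) (hA : 1 ≤ 4 * A) (m : ℕ) :
    ∃ C, 0 < C ∧ Bound f (m + 1) C := by
  induction m with
  | zero => exact ⟨1, one_pos, bound_one⟩
  | succ m ih =>
    obtain ⟨C, hC0, hC⟩ := ih
    exact ⟨_, add_pos_of_pos_of_nonneg hC0 zero_le, hC.succ hf hA⟩

end NashInterpolation

open NashInterpolation in
/-- Abstract numerical core of the Nash ε-type inequality (Lemma 2.1):
if `f : ℕ → ℝ≥0` satisfies the three-term ε-interpolation recursion
`f ℓ ≤ ε * f (ℓ+1) + 2ν ε⁻¹ * f (ℓ-1)` for all `ℓ ≥ 1` and all `ε > 0`,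
then for every `m ≥ 2` there is `C = C(ν,m)` with
`f ℓ ≤ ε^(m-ℓ) * f m + C * ε⁻ℓ * f 0` for all `ℓ ≤ m-1` and `ε ∈ (0,1]`. -/
theorem stmt0 (ν : ℝ≥0) (hν : 1 ≤ ν) (f : ℕ → ℝ≥0)
    (hrec : ∀ ℓ : ℕ, 1 ≤ ℓ → ∀ ε : ℝ≥0, 0 < ε →
      f ℓ ≤ ε * f (ℓ + 1) + 2 * ν * ε⁻¹ * f (ℓ - 1)) :
    ∀ m : ℕ, 2 ≤ m → ∃ C : ℝ≥0, 0 < C ∧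
      ∀ ℓ : ℕ, ℓ ≤ m - 1 → ∀ ε : ℝ≥0, 0 < ε → ε ≤ 1 →
        f ℓ ≤ ε ^ (m - ℓ) * f m + C * (ε⁻¹) ^ ℓ * f 0 := by
  intro m hm
  have hA : 1 ≤ 4 * (2 * ν) := by
    calc (1 : ℝ≥0) ≤ ν := hν
      _ ≤ 8 * ν := le_mul_of_one_le_left zero_le (by norm_num)
      _ = 4 * (2 * ν) := by ring
  obtain ⟨C, hC0, hC⟩ := exists_bound hrec hA (m - 1)
  rw [Nat.sub_add_cancel (by omega)] at hC
  exact ⟨C, hC0, fun ℓ hℓ => hC ℓ (by omega)⟩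
end

section
/- Let E, F be normed spaces, D ⊆ E a subspace, and P, P_m, P_{<m} : D → F linear with P = P_m + P_{<m}. Let S : D → ℝ≥0 satisfy S(α) ≥ ‖α‖_E for α ∈ D (S plays the role of Σ_{ℓ≤m}|α|_{ℓ,p}). Assume: (a) the maximal estimate S(α) ≤ C(‖Pα‖ + ‖α‖) for all α ∈ D, and (b) for every ε ∈ (0,1] there is C_ε with ‖P_{<m} α‖ ≤ ε·S(α) + C_ε‖α‖ for all α ∈ D. Then there exists C' such that ‖Pα‖ ≤ C'(‖P_m α‖ + ‖α‖) for all α ∈ D; moreover if instead the maximal estimate (a) holds for P_m, then ‖P_m α‖ ≤ C''(‖Pα‖ + ‖α‖) for all α ∈ D. Consequently, P satisfies the maximal estimate if and only if P_m does. -/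
/-!
Write `P = P_m + P_{<m}`, so that each of `‖Pα‖`, `‖P_m α‖` is at most the other plus
`‖P_{<m} α‖`. If `A ∈ {P, P_m}` satisfies the maximal estimate `S ≤ C (‖A·‖ + ‖·‖)`, choosing
`ε = min (1 / 2C) 1` in (b) gives `‖P_{<m} α‖ ≤ ‖Aα‖ / 2 + K ‖α‖`, and the half of `‖Aα‖` is
absorbed into the left-hand side. This bounds `A` by the other operator, and then the maximal
estimate passes from `A` to the other operator by substitution.
-/

section MaximalEstimate

variable {X F : Type*} [SeminormedAddGroup X] [SeminormedAddGroup F]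

def HasMaximalEstimate (S : X → ℝ) (A : X → F) : Prop :=
  ∃ C : ℝ, 0 < C ∧ ∀ x, S x ≤ C * (‖A x‖ + ‖x‖)

def IsLowerOrder (S : X → ℝ) (T : X → F) : Prop :=
  ∀ ε : ℝ, 0 < ε → ε ≤ 1 → ∃ Cε : ℝ, 0 < Cε ∧ ∀ x, ‖T x‖ ≤ ε * S x + Cε * ‖x‖

def IsRelativelyBounded (A B : X → F) : Prop :=
  ∃ C : ℝ, 0 < C ∧ ∀ x, ‖A x‖ ≤ C * (‖B x‖ + ‖x‖)

theorem IsLowerOrder.exists_norm_le_half_add {S : X → ℝ} {A T : X → F}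
    (hT : IsLowerOrder S T) (hA : HasMaximalEstimate S A) :
    ∃ K : ℝ, 0 < K ∧ ∀ x, ‖T x‖ ≤ ‖A x‖ / 2 + K * ‖x‖ := by
  obtain ⟨C, hC, hSA⟩ := hA
  set ε := min (1 / (2 * C)) 1
  have hε : 0 < ε := lt_min (by positivity) one_pos
  have hεC : ε * C ≤ 1 / 2 :=
    calc ε * C ≤ 1 / (2 * C) * C := by gcongr; exact min_le_left _ _
      _ = 1 / 2 := by field_simp
  obtain ⟨Cε, hCε, hTS⟩ := hT ε hε (min_le_right _ _)
  refine ⟨Cε + 1 / 2, by positivity, fun x => ?_⟩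
  have hεCx : ε * C * (‖A x‖ + ‖x‖) ≤ 1 / 2 * (‖A x‖ + ‖x‖) := by gcongr
  calc ‖T x‖ ≤ ε * S x + Cε * ‖x‖ := hTS x
    _ ≤ ε * (C * (‖A x‖ + ‖x‖)) + Cε * ‖x‖ := by gcongr; exact hSA x
    _ ≤ ‖A x‖ / 2 + (Cε + 1 / 2) * ‖x‖ := by linarith

theorem IsLowerOrder.isRelativelyBounded {S : X → ℝ} {A B T : X → F}
    (hT : IsLowerOrder S T) (hA : HasMaximalEstimate S A)
    (hABT : ∀ x, ‖A x‖ ≤ ‖B x‖ + ‖T x‖) :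
    IsRelativelyBounded A B := by
  obtain ⟨K, hK, hTA⟩ := hT.exists_norm_le_half_add hA
  refine ⟨2 * (K + 1), by positivity, fun x => ?_⟩
  calc ‖A x‖ ≤ 2 * ‖B x‖ + 2 * K * ‖x‖ := by linarith [hABT x, hTA x]
    _ ≤ 2 * (K + 1) * (‖B x‖ + ‖x‖) := by nlinarith [norm_nonneg (B x), norm_nonneg x]

theorem HasMaximalEstimate.of_isRelativelyBounded {S : X → ℝ} {A B : X → F}
    (hA : HasMaximalEstimate S A) (hAB : IsRelativelyBounded A B) :
    HasMaximalEstimate S B := by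
  obtain ⟨C, hC, hSA⟩ := hA
  obtain ⟨C', hC', hAB⟩ := hAB
  refine ⟨C * (C' + 1), by positivity, fun x => ?_⟩
  calc S x ≤ C * (‖A x‖ + ‖x‖) := hSA x
    _ ≤ C * (C' * (‖B x‖ + ‖x‖) + ‖x‖) := by gcongr; exact hAB x
    _ ≤ C * (C' + 1) * (‖B x‖ + ‖x‖) := by nlinarith [norm_nonneg (B x)]

end MaximalEstimate

theorem stmt11_general {E F : Type*} [NormedAddCommGroup E] [NormedSpace ℝ E]
    [NormedAddCommGroup F] [NormedSpace ℝ F]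
    (D : Subspace ℝ E) (P Pm Plt : D →ₗ[ℝ] F) (hsum : P = Pm + Plt)
    (S : D → ℝ)
    (hb : ∀ ε : ℝ, 0 < ε → ε ≤ 1 → ∃ Cε : ℝ, 0 < Cε ∧
      ∀ α : D, ‖Plt α‖ ≤ ε * S α + Cε * ‖α‖) :
    ((∃ C : ℝ, 0 < C ∧ ∀ α : D, S α ≤ C * (‖P α‖ + ‖α‖)) →
      ∃ C' : ℝ, 0 < C' ∧ ∀ α : D, ‖P α‖ ≤ C' * (‖Pm α‖ + ‖α‖)) ∧
    ((∃ C : ℝ, 0 < C ∧ ∀ α : D, S α ≤ C * (‖Pm α‖ + ‖α‖)) →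
      ∃ C'' : ℝ, 0 < C'' ∧ ∀ α : D, ‖Pm α‖ ≤ C'' * (‖P α‖ + ‖α‖)) ∧
    ((∃ C : ℝ, 0 < C ∧ ∀ α : D, S α ≤ C * (‖P α‖ + ‖α‖)) ↔
      (∃ C : ℝ, 0 < C ∧ ∀ α : D, S α ≤ C * (‖Pm α‖ + ‖α‖))) := by
  have hlow : IsLowerOrder S Plt := hb
  have hP : ∀ α, ‖P α‖ ≤ ‖Pm α‖ + ‖Plt α‖ := fun α => by
    rw [hsum, LinearMap.add_apply]
    exact norm_add_le _ _
  have hPm : ∀ α, ‖Pm α‖ ≤ ‖P α‖ + ‖Plt α‖ := fun α =>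
    calc ‖Pm α‖ = ‖P α - Plt α‖ := by simp [hsum]
      _ ≤ ‖P α‖ + ‖Plt α‖ := norm_sub_le _ _
  have hPbdd (h : HasMaximalEstimate S P) : IsRelativelyBounded P Pm :=
    hlow.isRelativelyBounded h hP
  have hPmbdd (h : HasMaximalEstimate S Pm) : IsRelativelyBounded Pm P :=
    hlow.isRelativelyBounded h hPm
  exact ⟨hPbdd, hPmbdd, fun (h : HasMaximalEstimate S P) => h.of_isRelativelyBounded (hPbdd h),
    fun (h : HasMaximalEstimate S Pm) => h.of_isRelativelyBounded (hPmbdd h)⟩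

/-- Abstract formulation of Proposition 2.2: `P = P_m + P_{<m}` on a subspace
`D`, `S` a Sobolev-type quantity dominating the norm, with the perturbation
`P_{<m}` controlled by `ε S(α) + C_ε ‖α‖`. Then the maximal estimate for `P`
implies `‖Pα‖ ≲ ‖P_m α‖ + ‖α‖`, the maximal estimate for `P_m` implies
`‖P_m α‖ ≲ ‖Pα‖ + ‖α‖`, and `P` satisfies the maximal estimate iff `P_m`
does. -/
theorem stmt11 {E F : Type*} [NormedAddCommGroup E] [NormedSpace ℝ E]
    [NormedAddCommGroup F] [NormedSpace ℝ F]
    (D : Subspace ℝ E) (P Pm Plt : D →ₗ[ℝ] F) (hsum : P = Pm + Plt)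
    (S : D → ℝ) (hS : ∀ α : D, ‖α‖ ≤ S α)
    (hb : ∀ ε : ℝ, 0 < ε → ε ≤ 1 → ∃ Cε : ℝ, 0 < Cε ∧
      ∀ α : D, ‖Plt α‖ ≤ ε * S α + Cε * ‖α‖) :
    ((∃ C : ℝ, 0 < C ∧ ∀ α : D, S α ≤ C * (‖P α‖ + ‖α‖)) →
      ∃ C' : ℝ, 0 < C' ∧ ∀ α : D, ‖P α‖ ≤ C' * (‖Pm α‖ + ‖α‖)) ∧
    ((∃ C : ℝ, 0 < C ∧ ∀ α : D, S α ≤ C * (‖Pm α‖ + ‖α‖)) →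
      ∃ C'' : ℝ, 0 < C'' ∧ ∀ α : D, ‖Pm α‖ ≤ C'' * (‖P α‖ + ‖α‖)) ∧
    ((∃ C : ℝ, 0 < C ∧ ∀ α : D, S α ≤ C * (‖P α‖ + ‖α‖)) ↔
      (∃ C : ℝ, 0 < C ∧ ∀ α : D, S α ≤ C * (‖Pm α‖ + ‖α‖))) :=
  stmt11_general D P Pm Plt hsum S hb
end
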